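/- arXiv:2510.08322 — 2 statements merged into one kernel-verified Lean document; each statement's English description precedes it below -/
import Mathlib

section
/- Let A be a unital C*-algebra, x ∈ A, and φ a state on A such that φ(x) = λ with |λ| = ‖x‖ = 1. If furthermore φ(x*x) = φ(x*)φ(x), then λ lies in the left spectrum of x, i.e., x - λ·1 is not left invertible. -/
/-!
Put `z = x - λ • 1`. Since `φ x = λ` and `φ (x⋆x) = |λ|²`, we get `φ (z⋆z) = 0`. By the
Cauchy–Schwarz inequality for the GNS semi-inner product `⟪a, b⟫ = φ (a⋆b)`, `φ` then vanishes
on the left ideal `A z`; so `y z = 1` would force `φ 1 = 0`.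
-/

/-- A state on a unital C*-algebra, presented as a unital positive linear functional. -/
def IsState {A : Type*} [NormedRing A] [StarRing A] [NormedAlgebra ℂ A]
    (φ : A →ₗ[ℂ] ℂ) : Prop :=
  φ 1 = 1 ∧ ∀ a : A, ∃ r : ℝ, 0 ≤ r ∧ φ (star a * a) = (r : ℂ)

open scoped ComplexOrder
open ComplexConjugate

namespace LinearMap

variable {A : Type*} [Ring A] [StarRing A] [Algebra ℂ A] [StarModule ℂ A]
  {φ : A →ₗ[ℂ] ℂ}

/-- Positivity alone forces `φ (star a * b)` to be Hermitian: polarize with `a + b` and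
`a + I • b`, whose values are real. -/
theorem conj_map_star_mul_of_nonneg (hφ : ∀ a : A, 0 ≤ φ (star a * a)) (a b : A) :
    conj (φ (star a * b)) = φ (star b * a) := by
  have im_zero (c : A) : (φ (star c * c)).im = 0 := (Complex.nonneg_iff.mp (hφ c)).2.symm
  have hadd : star (a + b) * (a + b) = star a * a + star b * b + star a * b + star b * a := by
    simp only [star_add, add_mul, mul_add]; abel
  have hI : star (a + Complex.I • b) * (a + Complex.I • b)
      = star a * a + star b * b + Complex.I • (star a * b) - Complex.I • (star b * a) := by
    simp only [star_add, star_smul, add_mul, mul_add, smul_mul_assoc, mul_smul_comm,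
      Complex.star_def, Complex.conj_I]
    match_scalars <;> simp
  have h₁ := im_zero (a + b)
  have h₂ := im_zero (a + Complex.I • b)
  rw [hadd, map_add, map_add, map_add, Complex.add_im, Complex.add_im, Complex.add_im,
    im_zero, im_zero] at h₁
  rw [hI, map_sub, map_add, map_add, map_smul, map_smul, Complex.sub_im, Complex.add_im,
    Complex.add_im, im_zero, im_zero, smul_eq_mul, smul_eq_mul, Complex.I_mul_im,
    Complex.I_mul_im] at h₂
  apply Complex.ext <;> simp only [Complex.conj_re, Complex.conj_im] <;> linarith

abbrev gnsPreInnerProductCore (hφ : ∀ a : A, 0 ≤ φ (star a * a)) :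
    PreInnerProductSpace.Core ℂ A where
  inner a b := φ (star a * b)
  conj_inner_symm a b := conj_map_star_mul_of_nonneg hφ b a
  re_inner_nonneg a := (Complex.nonneg_iff.mp (hφ a)).1
  add_left a b c := by simp only [star_add, add_mul, map_add]
  smul_left a b r := by
    simp only [star_smul, smul_mul_assoc, map_smul, smul_eq_mul, Complex.star_def]

theorem map_star_mul_eq_zero_of_map_star_mul_self_eq_zero (hφ : ∀ a : A, 0 ≤ φ (star a * a))
    {a : A} (ha : φ (star a * a) = 0) (b : A) : φ (star b * a) = 0 := by
  let := gnsPreInnerProductCore hφ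
  have cauchy_schwarz := InnerProductSpace.Core.inner_mul_inner_self_le (𝕜 := ℂ) b a
  change ‖φ (star b * a)‖ * ‖φ (star a * b)‖ ≤ (φ (star b * b)).re * (φ (star a * a)).re
    at cauchy_schwarz
  rw [ha, Complex.zero_re, mul_zero, ← conj_map_star_mul_of_nonneg hφ b a, Complex.norm_conj,
    ← sq] at cauchy_schwarz
  exact norm_eq_zero.mp <| pow_eq_zero_iff two_ne_zero |>.mp <|
    le_antisymm cauchy_schwarz (sq_nonneg _)

theorem map_mul_eq_zero_of_map_star_mul_self_eq_zero (hφ : ∀ a : A, 0 ≤ φ (star a * a))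
    {a : A} (ha : φ (star a * a) = 0) (y : A) : φ (y * a) = 0 := by
  simpa using map_star_mul_eq_zero_of_map_star_mul_self_eq_zero hφ ha (star y)

theorem not_exists_mul_eq_one_of_map_star_mul_self_eq_zero (hφ : ∀ a : A, 0 ≤ φ (star a * a))
    (h1 : φ 1 ≠ 0) {a : A} (ha : φ (star a * a) = 0) : ¬ ∃ y : A, y * a = 1 := by
  rintro ⟨y, hy⟩
  exact h1 (hy ▸ map_mul_eq_zero_of_map_star_mul_self_eq_zero hφ ha y)

theorem map_star_of_nonneg (hφ : ∀ a : A, 0 ≤ φ (star a * a)) (a : A) :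
    φ (star a) = conj (φ a) := by
  simpa using (conj_map_star_mul_of_nonneg hφ 1 a).symm

theorem map_star_mul_self_sub_smul_one (hφ : ∀ a : A, 0 ≤ φ (star a * a)) (h1 : φ 1 = 1)
    (x : A) : φ (star (x - φ x • 1) * (x - φ x • 1)) = φ (star x * x) - conj (φ x) * φ x := by
  have expand : star (x - φ x • 1) * (x - φ x • 1)
      = star x * x - φ x • star x - conj (φ x) • x + (conj (φ x) * φ x) • 1 := by
    simp only [star_sub, star_smul, star_one, sub_mul, mul_sub, smul_mul_assoc, mul_smul_comm,
      one_mul, mul_one, Complex.star_def]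
    module
  rw [expand]
  simp only [map_add, map_sub, map_smul, smul_eq_mul, map_star_of_nonneg hφ, h1]
  ring

end LinearMap

theorem IsState.map_star_mul_self_nonneg {A : Type*} [NormedRing A] [StarRing A]
    [NormedAlgebra ℂ A] {φ : A →ₗ[ℂ] ℂ} (hφ : IsState φ) (a : A) : 0 ≤ φ (star a * a) := by
  obtain ⟨r, hr, h⟩ := hφ.2 a
  exact h ▸ Complex.zero_le_real.mpr hr

theorem mem_left_spectrum_of_state_attaining_unimodular_norm_general
    {A : Type*} [NormedRing A] [StarRing A] [NormedAlgebra ℂ A]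
    [StarModule ℂ A]
    (x : A) (φ : A →ₗ[ℂ] ℂ) (hφ : IsState φ) (lam : ℂ)
    (hval : φ x = lam)
    (hmult : φ (star x * x) = φ (star x) * φ x) :
    ¬ ∃ y : A, y * (x - lam • 1) = 1 := by
  have hpos := hφ.map_star_mul_self_nonneg
  subst hval
  refine φ.not_exists_mul_eq_one_of_map_star_mul_self_eq_zero hpos (hφ.1 ▸ one_ne_zero) ?_
  rw [φ.map_star_mul_self_sub_smul_one hpos hφ.1, hmult, φ.map_star_of_nonneg hpos, sub_self]

theorem mem_left_spectrum_of_state_attaining_unimodular_norm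
    {A : Type*} [NormedRing A] [StarRing A] [CStarRing A] [NormedAlgebra ℂ A]
    [StarModule ℂ A] [CompleteSpace A]
    (x : A) (φ : A →ₗ[ℂ] ℂ) (hφ : IsState φ) (lam : ℂ)
    (hval : φ x = lam) (hlam : ‖lam‖ = 1) (hx : ‖x‖ = 1)
    (hmult : φ (star x * x) = φ (star x) * φ x) :
    ¬ ∃ y : A, y * (x - lam • 1) = 1 :=
  mem_left_spectrum_of_state_attaining_unimodular_norm_general x φ hφ lam hval hmult
end

section
/- Every matrix x ∈ M₂(ℂ) is unitarily similar to a matrix with equal diagonal entries, i.e., there exists a unitary u ∈ M₂(ℂ) such that the two diagonal entries of u* x u are equal. -/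
open Complex Real

/-- Key scalar lemma: we can choose angles θ, φ so that
`δ·cos 2θ + (b·e^{iφ} + c·e^{-iφ})·sin 2θ = 0`. -/
lemma key_angles (δ b c : ℂ) :
    ∃ cθ sθ cφ sφ : ℝ, (cθ : ℂ) ^ 2 + (sθ : ℂ) ^ 2 = 1 ∧
      ((cφ : ℂ) + sφ * Complex.I) * ((cφ : ℂ) - sφ * Complex.I) = 1 ∧
      δ * ((cθ : ℂ) ^ 2 - (sθ : ℂ) ^ 2) +
        (b * ((cφ : ℂ) + sφ * Complex.I) + c * ((cφ : ℂ) - sφ * Complex.I)) *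
          (2 * sθ * cθ) = 0 := by
  by_cases hδ : δ = 0
  · refine ⟨1, 0, 1, 0, by norm_num, by norm_num, by simp [hδ]⟩
  · set z : ℂ := b / δ - starRingEnd ℂ (c / δ) with hz
    set φ : ℝ := -z.arg with hφ
    set E : ℂ := (Real.cos φ : ℂ) + Real.sin φ * Complex.I with hE
    set E' : ℂ := (Real.cos φ : ℂ) - Real.sin φ * Complex.I with hE'
    have h1 : (Real.cos φ : ℂ) ^ 2 + (Real.sin φ : ℂ) ^ 2 = 1 := by
      have hR : Real.cos φ ^ 2 + Real.sin φ ^ 2 = 1 := by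
        linarith [Real.sin_sq_add_cos_sq φ]
      exact_mod_cast hR
    have hEE' : E * E' = 1 := by
      rw [hE, hE']
      linear_combination h1 - (Real.sin φ : ℂ) ^ 2 * Complex.I_sq
    have hexp : E = Complex.exp (φ * Complex.I) := by
      rw [hE, Complex.exp_mul_I, ← Complex.ofReal_cos, ← Complex.ofReal_sin]
    have hzE : z * E = (‖z‖ : ℂ) := by
      rw [hexp, hφ]
      calc z * Complex.exp ((-z.arg : ℝ) * Complex.I)
          = (‖z‖ : ℂ) * Complex.exp (z.arg * Complex.I) *
              Complex.exp ((-z.arg : ℝ) * Complex.I) := by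
            rw [Complex.norm_mul_exp_arg_mul_I]
        _ = (‖z‖ : ℂ) := by
            rw [mul_assoc, ← Complex.exp_add]
            have h0 : (z.arg : ℂ) * Complex.I + ((-z.arg : ℝ) : ℂ) * Complex.I = 0 := by
              push_cast; ring
            rw [h0, Complex.exp_zero, mul_one]
    set W : ℂ := b * E + c * E' with hW
    have hE'conj : starRingEnd ℂ E' = E := by
      rw [hE, hE']
      simp only [map_sub, map_mul, Complex.conj_ofReal, Complex.conj_I]
      ring
    have hsplit : W / δ = z * E + (c / δ * E' + starRingEnd ℂ (c / δ * E')) := by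
      rw [map_mul, hE'conj, hz, hW]
      field_simp
      ring
    have him : (W / δ).im = 0 := by
      rw [hsplit, Complex.add_im, Complex.add_conj, hzE]
      simp
    set r : ℝ := (W / δ).re with hr
    have hWδ : W = (r : ℂ) * δ := by
      have h : W / δ = (r : ℂ) := Complex.ext rfl (by simpa using him)
      rw [div_eq_iff hδ] at h
      exact h
    -- now choose θ
    set θ : ℝ := (π / 2 + Real.arctan r) / 2 with hθ
    have h2θ : 2 * θ = π / 2 + Real.arctan r := by rw [hθ]; ring
    have hreal : Real.cos θ ^ 2 - Real.sin θ ^ 2 +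
        r * (2 * Real.sin θ * Real.cos θ) = 0 := by
      have hc : Real.cos θ ^ 2 - Real.sin θ ^ 2 = Real.cos (2 * θ) := by
        rw [Real.cos_two_mul, ← Real.sin_sq_add_cos_sq θ]; ring
      have hs : 2 * Real.sin θ * Real.cos θ = Real.sin (2 * θ) := by
        rw [Real.sin_two_mul]
      rw [hc, hs, h2θ, Real.cos_add, Real.sin_add, Real.cos_pi_div_two,
        Real.sin_pi_div_two, Real.sin_arctan, Real.cos_arctan]
      have h0 : Real.sqrt (1 + r ^ 2) ≠ 0 := by positivity
      field_simp
      ring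
    refine ⟨Real.cos θ, Real.sin θ, Real.cos φ, Real.sin φ, ?_, hEE', ?_⟩
    · have hR : Real.cos θ ^ 2 + Real.sin θ ^ 2 = 1 := by
        linarith [Real.sin_sq_add_cos_sq θ]
      exact_mod_cast hR
    · have hcast : (Real.cos θ : ℂ) ^ 2 - (Real.sin θ : ℂ) ^ 2 +
          (r : ℂ) * (2 * (Real.sin θ : ℂ) * (Real.cos θ : ℂ)) = 0 := by
        exact_mod_cast hreal
      linear_combination δ * hcast + (2 * (Real.sin θ : ℂ) * Real.cos θ) * hWδ

theorem unitarily_similar_to_constant_diagonal_two_by_two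
    (x : Matrix (Fin 2) (Fin 2) ℂ) :
    ∃ u : Matrix (Fin 2) (Fin 2) ℂ, u ∈ Matrix.unitaryGroup (Fin 2) ℂ ∧
      (star u * x * u) 0 0 = (star u * x * u) 1 1 := by
  obtain ⟨cθ, sθ, cφ, sφ, h1, h2, h3⟩ :=
    key_angles (x 0 0 - x 1 1) (x 0 1) (x 1 0)
  set E : ℂ := (cφ : ℂ) + sφ * Complex.I with hE
  set E' : ℂ := (cφ : ℂ) - sφ * Complex.I with hE'
  set u : Matrix (Fin 2) (Fin 2) ℂ :=
    !![(cθ : ℂ), -E' * sθ; E * sθ, (cθ : ℂ)] with hu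
  have hstar : star u = !![(cθ : ℂ), E' * sθ; -E * sθ, (cθ : ℂ)] := by
    rw [hu]
    ext i j
    fin_cases i <;> fin_cases j <;>
      simp only [Matrix.star_apply, Matrix.of_apply, Matrix.cons_val', Matrix.cons_val_zero,
        Matrix.cons_val_one, Matrix.head_cons, Matrix.head_fin_const,
        Matrix.empty_val', Matrix.cons_val_fin_one, Fin.zero_eta, Fin.mk_one,
        RCLike.star_def, map_mul, map_sub, map_add, map_neg,
        Complex.conj_ofReal, Complex.conj_I, hE, hE'] <;> ring
  refine ⟨u, ?_, ?_⟩
  · rw [Matrix.mem_unitaryGroup_iff', hstar, hu, Matrix.mul_fin_two,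
      Matrix.one_fin_two]
    have e00 : (cθ : ℂ) * cθ + E' * sθ * (E * sθ) = 1 := by
      linear_combination h1 + (sθ : ℂ) ^ 2 * h2
    have e01 : (cθ : ℂ) * (-E' * sθ) + E' * sθ * cθ = 0 := by ring
    have e10 : -E * sθ * cθ + (cθ : ℂ) * (E * sθ) = 0 := by ring
    have e11 : -E * sθ * (-E' * sθ) + (cθ : ℂ) * cθ = 1 := by
      linear_combination h1 + (sθ : ℂ) ^ 2 * h2
    rw [e00, e01, e10, e11]
  · rw [hstar, hu, Matrix.eta_fin_two x, Matrix.mul_fin_two, Matrix.mul_fin_two]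
    simp only [Matrix.of_apply, Matrix.cons_val', Matrix.cons_val_zero,
      Matrix.cons_val_one, Matrix.head_cons, Matrix.head_fin_const,
      Matrix.empty_val', Matrix.cons_val_fin_one]
    linear_combination h3 + (x 1 1 - x 0 0) * (sθ : ℂ) ^ 2 * h2
end
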